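/- arXiv:1606.04737 — 3 statements merged into one kernel-verified Lean document; each statement's English description precedes it below -/
import Mathlib

section
/- Let f ∈ ℝ[x, y] be a nonzero homogeneous polynomial of degree d ≥ 1 and let q be the number of distinct real projective roots of f, i.e., the number of points [v] ∈ ℝℙ¹ with f(v) = 0. Then f has at least max(q, 1) distinct real eigenvectors: there exist at least max(q, 1) distinct classes [v] ∈ ℝℙ¹ such that v is a nonzero vector with ∇f(v) = λv for some λ ∈ ℝ. -/
/-!
Restrict `f` to the unit circle, `F θ = f (cos θ, sin θ)`. For `u = (cos θ, sin θ)` the chain rule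
gives `F' θ = det (u, ∇f u)`, so the critical points of `F` are exactly the eigenvectors of `f`.
The roots of `f` in `ℝℙ¹` correspond to the zeros of `F` in any window `[a, a + π)`, and by
homogeneity `F (a + π) = ± F a`. Choosing `a` to be a zero, the `q` zeros in `[a, a + π)` together
with `a + π` give `q + 1` zeros in `[a, a + π]`, so Rolle's theorem yields `q` critical points in
`(a, a + π)`, which are distinct lines. Without roots, periodicity of `F` still gives one critical
point.
-/

open MvPolynomial

/-- The gradient of a polynomial `f ∈ ℝ[x₁,…,xₙ]` at a point `v ∈ ℝⁿ`. -/
noncomputable def grad {n : ℕ} (f : MvPolynomial (Fin n) ℝ) (v : Fin n → ℝ) : Fin n → ℝ :=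
  fun i => eval v (pderiv i f)

/-- The set of real eigenvectors of `f`, counted projectively: classes
`[v] ∈ ℝℙⁿ⁻¹` of nonzero vectors `v` with `∇f(v) = λ v` for some real `λ`. -/
def eigSet {n : ℕ} (f : MvPolynomial (Fin n) ℝ) :
    Set (Projectivization ℝ (Fin n → ℝ)) :=
  {p | ∃ (v : Fin n → ℝ) (hv : v ≠ 0) (lam : ℝ),
    p = Projectivization.mk ℝ v hv ∧ grad f v = lam • v}

open Real Set

namespace MvPolynomial

theorem IsHomogeneous.eval_smul {R σ : Type*} [CommSemiring R] {f : MvPolynomial σ R} {d : ℕ}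
    (hf : f.IsHomogeneous d) (c : R) (v : σ → R) : eval (c • v) f = c ^ d * eval v f := by
  rw [eval_eq, eval_eq, Finset.mul_sum]
  refine Finset.sum_congr rfl fun m hm => ?_
  have hdeg : ∑ i ∈ m.support, m i = d :=
    (DFunLike.congr_fun Finsupp.degree_eq_weight_one m).trans (hf (mem_support_iff.mp hm))
  simp only [Pi.smul_apply, smul_eq_mul, mul_pow, Finset.prod_mul_distrib,
    Finset.prod_pow_eq_pow_sum, hdeg]
  ring

theorem hasDerivAt_eval_comp {𝕜 ι : Type*} [NontriviallyNormedField 𝕜] [Fintype ι]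
    (f : MvPolynomial ι 𝕜) {γ : 𝕜 → ι → 𝕜} {γ' : ι → 𝕜} {t : 𝕜} (hγ : HasDerivAt γ γ' t) :
    HasDerivAt (fun s => eval (γ s) f) (∑ i, eval (γ t) (pderiv i f) * γ' i) t := by
  classical
  induction f using MvPolynomial.induction_on with
  | C a => simpa using hasDerivAt_const t a
  | add p q hp hq =>
    simp only [map_add, add_mul, Finset.sum_add_distrib]
    exact hp.add hq
  | mul_X p j hp =>
    simp only [map_mul, eval_X]
    refine (hp.mul (hasDerivAt_pi.mp hγ j)).congr_deriv ?_
    simp only [pderiv_mul, pderiv_X, Pi.single_apply, map_add, map_mul, eval_X, mul_ite, mul_one,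
      mul_zero, apply_ite (eval (γ t)), map_zero, add_mul, ite_mul, zero_mul, Finset.sum_add_distrib,
      Finset.sum_ite_eq, Finset.mem_univ, if_true]
    rw [Finset.sum_mul]
    exact congrArg (· + _) (Finset.sum_congr rfl fun _ _ => mul_right_comm _ _ _)

end MvPolynomial

theorem exists_finset_deriv_eq_zero_card_ge {F : ℝ → ℝ} (hF : Differentiable ℝ F) {a b : ℝ}
    (A : Finset ℝ) (hA : ∀ x ∈ A, x ∈ Icc a b ∧ F x = 0) :
    ∃ T : Finset ℝ, A.card ≤ T.card + 1 ∧ ∀ c ∈ T, c ∈ Ioo a b ∧ deriv F c = 0 := by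
  by_cases hC : {c ∈ Ioo a b | deriv F c = 0}.Finite
  · refine ⟨hC.toFinset, A.card_le_of_interleaved fun x hx y hy hxy _ => ?_,
      fun c hc => hC.mem_toFinset.mp hc⟩
    obtain ⟨c, hc, hc0⟩ := exists_deriv_eq_zero hxy hF.continuous.continuousOn
      ((hA x hx).2.trans (hA y hy).2.symm)
    exact ⟨c, hC.mem_toFinset.mpr ⟨⟨(hA x hx).1.1.trans_lt hc.1, hc.2.trans_le (hA y hy).1.2⟩, hc0⟩,
      hc⟩
  · obtain ⟨T, hT, hcard⟩ := Set.Infinite.exists_subset_card_eq hC A.card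
    exact ⟨T, by omega, fun c hc => hT hc⟩

noncomputable def angleVec (θ : ℝ) : Fin 2 → ℝ := ![cos θ, sin θ]

theorem angleVec_ne_zero (θ : ℝ) : angleVec θ ≠ 0 := by
  intro h
  have h0 : cos θ = 0 := congrFun h 0
  have h1 : sin θ = 0 := congrFun h 1
  simpa [h0, h1] using sin_sq_add_cos_sq θ

theorem angleVec_add_pi (θ : ℝ) : angleVec (θ + π) = (-1 : ℝ) • angleVec θ := by
  ext i; fin_cases i <;> simp [angleVec]

theorem hasDerivAt_angleVec (θ : ℝ) : HasDerivAt angleVec ![-sin θ, cos θ] θ := by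
  refine hasDerivAt_pi.mpr fun i => ?_
  fin_cases i
  · simpa [angleVec] using hasDerivAt_cos θ
  · simpa [angleVec] using hasDerivAt_sin θ

noncomputable def angleLine (θ : ℝ) : Projectivization ℝ (Fin 2 → ℝ) :=
  .mk ℝ (angleVec θ) (angleVec_ne_zero θ)

theorem angleLine_add_int_mul_pi (θ : ℝ) (k : ℤ) : angleLine (θ + k * π) = angleLine θ := by
  refine (Projectivization.mk_eq_mk_iff' _ _ _ _ _).mpr ⟨(-1) ^ k, ?_⟩
  ext i; fin_cases i <;> simp [angleVec, cos_add_int_mul_pi, sin_add_int_mul_pi]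

theorem sin_sub_eq_zero_of_angleLine_eq {s t : ℝ} (h : angleLine s = angleLine t) :
    sin (s - t) = 0 := by
  obtain ⟨c, hc⟩ := (Projectivization.mk_eq_mk_iff' _ _ _ _ _).mp h
  have h0 : c * cos t = cos s := congrFun hc 0
  have h1 : c * sin t = sin s := congrFun hc 1
  rw [sin_sub, ← h0, ← h1]
  ring

theorem injOn_angleLine (a : ℝ) : InjOn angleLine (Ico a (a + π)) := by
  intro s hs t ht h
  have := sin_sub_eq_zero_of_angleLine_eq h
  rw [sin_eq_zero_iff_of_lt_of_lt (by linarith [hs.1, ht.2]) (by linarith [hs.2, ht.1])] at this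
  linarith

theorem exists_angleLine_eq (p : Projectivization ℝ (Fin 2 → ℝ)) : ∃ θ, angleLine θ = p := by
  induction p using Projectivization.ind with
  | h v hv =>
    set z : ℂ := ⟨v 0, v 1⟩
    have hz : z ≠ 0 := by
      intro h
      refine hv (funext fun i => ?_)
      fin_cases i
      · exact congrArg Complex.re h
      · exact congrArg Complex.im h
    refine ⟨Complex.arg z, (Projectivization.mk_eq_mk_iff' _ _ _ _ _).mpr ⟨‖z‖⁻¹, ?_⟩⟩
    ext i
    fin_cases i
    · simp [angleVec, Complex.cos_arg hz, z, div_eq_inv_mul]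
    · simp [angleVec, Complex.sin_arg, z, div_eq_inv_mul]

theorem surjOn_angleLine (a : ℝ) : SurjOn angleLine (Ico a (a + π)) univ := by
  intro p _
  obtain ⟨θ, rfl⟩ := exists_angleLine_eq p
  refine ⟨toIcoMod pi_pos a θ, toIcoMod_mem_Ico _ _ _, ?_⟩
  rw [← self_sub_toIcoDiv_zsmul, zsmul_eq_mul, sub_eq_add_neg, ← neg_mul, ← Int.cast_neg,
    angleLine_add_int_mul_pi]

theorem differentiable_eval_angleVec (f : MvPolynomial (Fin 2) ℝ) :
    Differentiable ℝ fun θ => eval (angleVec θ) f :=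
  fun θ => (hasDerivAt_eval_comp f (hasDerivAt_angleVec θ)).differentiableAt

theorem angleLine_mem_eigSet (f : MvPolynomial (Fin 2) ℝ) {θ : ℝ}
    (h : deriv (fun s => eval (angleVec s) f) θ = 0) : angleLine θ ∈ eigSet f := by
  have hdet := (hasDerivAt_eval_comp f (hasDerivAt_angleVec θ)).deriv
  rw [h, Fin.sum_univ_two] at hdet
  set g := grad f (angleVec θ)
  change 0 = g 0 * -sin θ + g 1 * cos θ at hdet
  refine ⟨angleVec θ, angleVec_ne_zero θ, g 0 * cos θ + g 1 * sin θ, rfl, ?_⟩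
  ext i
  fin_cases i
  · show g 0 = (g 0 * cos θ + g 1 * sin θ) * cos θ
    linear_combination (sin θ) * hdet - g 0 * sin_sq_add_cos_sq θ
  · show g 1 = (g 0 * cos θ + g 1 * sin θ) * sin θ
    linear_combination (-cos θ) * hdet - g 1 * sin_sq_add_cos_sq θ

theorem exists_angleLine_mem_eigSet (f : MvPolynomial (Fin 2) ℝ) : ∃ θ, angleLine θ ∈ eigSet f := by
  have hper : eval (angleVec 0) f = eval (angleVec (2 * π)) f := by simp [angleVec]
  obtain ⟨θ, -, hθ⟩ := exists_deriv_eq_zero two_pi_pos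
    (differentiable_eval_angleVec f).continuous.continuousOn hper
  exact ⟨θ, angleLine_mem_eigSet f hθ⟩

def projRoots {n : ℕ} (f : MvPolynomial (Fin n) ℝ) : Set (Projectivization ℝ (Fin n → ℝ)) :=
  {p | ∃ (v : Fin n → ℝ) (hv : v ≠ 0), p = Projectivization.mk ℝ v hv ∧ eval v f = 0}

theorem angleLine_mem_projRoots_iff {d : ℕ} {f : MvPolynomial (Fin 2) ℝ} (hf : f.IsHomogeneous d)
    (θ : ℝ) : angleLine θ ∈ projRoots f ↔ eval (angleVec θ) f = 0 := by
  refine ⟨fun ⟨v, hv, h, hfv⟩ => ?_, fun h => ⟨_, _, rfl, h⟩⟩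
  obtain ⟨c, hc⟩ := (Projectivization.mk_eq_mk_iff' _ _ _ _ _).mp h
  rw [← hc, hf.eval_smul, hfv, mul_zero]

theorem ncard_zeros_Ico_eq_ncard_projRoots {d : ℕ} {f : MvPolynomial (Fin 2) ℝ}
    (hf : f.IsHomogeneous d) (a : ℝ) :
    {θ ∈ Ico a (a + π) | eval (angleVec θ) f = 0}.ncard = (projRoots f).ncard := by
  have himage : angleLine '' {θ ∈ Ico a (a + π) | eval (angleVec θ) f = 0} = projRoots f := by
    ext p
    refine ⟨?_, fun hp => ?_⟩
    · rintro ⟨θ, ⟨-, hθ⟩, rfl⟩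
      exact (angleLine_mem_projRoots_iff hf θ).mpr hθ
    · obtain ⟨θ, hθ, rfl⟩ := surjOn_angleLine a (mem_univ p)
      exact ⟨θ, ⟨hθ, (angleLine_mem_projRoots_iff hf θ).mp hp⟩, rfl⟩
  rw [← himage, ((injOn_angleLine a).mono (sep_subset _ _)).ncard_image]

theorem exists_finset_eigSet_ncard_projRoots_le {d : ℕ} {f : MvPolynomial (Fin 2) ℝ}
    (hf : f.IsHomogeneous d) (hroot : (projRoots f).ncard ≠ 0) :
    ∃ T : Finset (Projectivization ℝ (Fin 2 → ℝ)),
      (projRoots f).ncard ≤ T.card ∧ ∀ p ∈ T, p ∈ eigSet f := by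
  classical
  set F := fun θ => eval (angleVec θ) f
  obtain ⟨a, -, hFa⟩ : {θ ∈ Ico 0 (0 + π) | F θ = 0}.Nonempty :=
    nonempty_of_ncard_ne_zero (by rwa [ncard_zeros_Ico_eq_ncard_projRoots hf])
  have hZ := ncard_zeros_Ico_eq_ncard_projRoots hf a
  have hfin : {θ ∈ Ico a (a + π) | F θ = 0}.Finite := finite_of_ncard_ne_zero (hZ ▸ hroot)
  set A := insert (a + π) hfin.toFinset
  have hAcard : A.card = (projRoots f).ncard + 1 := by
    rw [Finset.card_insert_of_notMem (by simp), ← ncard_eq_toFinset_card _ hfin, hZ]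
  have hA : ∀ x ∈ A, x ∈ Icc a (a + π) ∧ F x = 0 := by
    simp only [A, Finset.mem_insert, hfin.mem_toFinset]
    rintro x (rfl | ⟨hx, hFx⟩)
    · refine ⟨right_mem_Icc.mpr (by linarith [pi_pos]), ?_⟩
      simp only [F, angleVec_add_pi, hf.eval_smul]
      exact mul_eq_zero_of_right _ hFa
    · exact ⟨Ico_subset_Icc_self hx, hFx⟩
  obtain ⟨T, hT, hcrit⟩ := exists_finset_deriv_eq_zero_card_ge (differentiable_eval_angleVec f) A hA
  refine ⟨T.image angleLine, ?_, ?_⟩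
  · rw [Finset.card_image_of_injOn
      ((injOn_angleLine a).mono fun c hc => Ioo_subset_Ico_self (hcrit c hc).1)]
    omega
  · simp only [Finset.mem_image]
    rintro _ ⟨θ, hθ, rfl⟩
    exact angleLine_mem_eigSet f (hcrit θ hθ).2

theorem binary_form_eigenvectors_ge_roots_general
    {d : ℕ} (f : MvPolynomial (Fin 2) ℝ)
    (hf : f.IsHomogeneous d) (q : ℕ)
    (hq : {p : Projectivization ℝ (Fin 2 → ℝ) | ∃ (v : Fin 2 → ℝ) (hv : v ≠ 0),
      p = Projectivization.mk ℝ v hv ∧ eval v f = 0}.ncard = q) :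
    ∃ T : Finset (Projectivization ℝ (Fin 2 → ℝ)),
      max q 1 ≤ T.card ∧ ∀ p ∈ T, p ∈ eigSet f := by
  change (projRoots f).ncard = q at hq
  rcases Nat.eq_zero_or_pos q with rfl | hq_pos
  · obtain ⟨θ, hθ⟩ := exists_angleLine_mem_eigSet f
    exact ⟨{angleLine θ}, by simp, by simpa using hθ⟩
  · obtain ⟨T, hT, hTeig⟩ := exists_finset_eigSet_ncard_projRoots_le hf (by omega)
    exact ⟨T, by omega, hTeig⟩

/-- A nonzero binary form of degree `d ≥ 1` with `q` distinct real projective roots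
has at least `max q 1` distinct real eigenvectors. -/
theorem binary_form_eigenvectors_ge_roots
    {d : ℕ} (hd : 1 ≤ d) (f : MvPolynomial (Fin 2) ℝ) (hf0 : f ≠ 0)
    (hf : f.IsHomogeneous d) (q : ℕ)
    (hq : {p : Projectivization ℝ (Fin 2 → ℝ) | ∃ (v : Fin 2 → ℝ) (hv : v ≠ 0),
      p = Projectivization.mk ℝ v hv ∧ eval v f = 0}.ncard = q) :
    ∃ T : Finset (Projectivization ℝ (Fin 2 → ℝ)),
      max q 1 ≤ T.card ∧ ∀ p ∈ T, p ∈ eigSet f :=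
  binary_form_eigenvectors_ge_roots_general f hf q hq
end

section
/- Let n ≥ 1 and let f ∈ ℝ[x₁,…,xₙ] be a homogeneous polynomial of degree d ≥ 1. Then every connected component U of the set {v ∈ S^{n-1} : f(v) ≠ 0} contains a real eigenvector of f: there exist v ∈ U and λ ∈ ℝ with ∇f(v) = λv. -/
/-!
Fix `x` in a connected component `U` of `{v ∈ S^{n-1} : f v ≠ 0}`. The function `v ↦ f(x) f(v)`
attains its maximum over the compact set `closure U` at some `p`, where it is positive.
Because the sphere is locally connected, a connected neighbourhood of `p` in the sphere on which
`f ≠ 0` meets `U`, hence lies in `U`; so `p ∈ U` and `p` is a local extremum of `f` on the sphere.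
Lagrange multipliers for the constraint `∑ vᵢ² = 1` then give `∇f(p) = λ p`.
-/

open MvPolynomial Filter Topology Metric

theorem MvPolynomial.hasStrictFDerivAt_eval {σ : Type*} [Fintype σ]
    (f : MvPolynomial σ ℝ) (v : σ → ℝ) :
    HasStrictFDerivAt (fun w => eval w f)
      (∑ i, eval v (pderiv i f) • ContinuousLinearMap.proj (R := ℝ) (φ := fun _ => ℝ) i) v := by
  classical
  induction f using MvPolynomial.induction_on with
  | C a =>
    simp only [eval_C]
    refine (hasStrictFDerivAt_const (𝕜 := ℝ) a v).congr_fderiv ?_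
    ext; simp
  | add p q hp hq =>
    simp only [map_add]
    refine (hp.add hq).congr_fderiv ?_
    ext; simp [add_mul, Finset.sum_add_distrib]
  | mul_X p i hp =>
    simp only [eval_mul, eval_X]
    refine (hp.mul (ContinuousLinearMap.proj i).hasStrictFDerivAt).congr_fderiv ?_
    ext w
    simp [pderiv_X, Pi.single_apply, apply_ite (eval v), mul_add, Finset.sum_add_distrib,
      Finset.mul_sum, mul_comm, mul_left_comm]

section ConnectedComponent

variable {X : Type*} [TopologicalSpace X] {S W : Set X} {p : X}

theorem exists_isPreconnected_mem_nhdsWithin_subset [LocallyConnectedSpace S] (hp : p ∈ S)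
    (hW : W ∈ 𝓝[S] p) : ∃ N ∈ 𝓝[S] p, N ⊆ W ∧ IsPreconnected N := by
  have hW' : Subtype.val ⁻¹' W ∈ 𝓝 (⟨p, hp⟩ : S) := preimage_coe_mem_nhds_subtype.2 hW
  refine ⟨Subtype.val '' connectedComponentIn (Subtype.val ⁻¹' W) ⟨p, hp⟩, ?_, ?_, ?_⟩
  · exact mem_nhds_subtype_iff_nhdsWithin.1 (connectedComponentIn_mem_nhds hW')
  · exact Set.image_subset_iff.2 (connectedComponentIn_subset _ _)
  · exact isPreconnected_connectedComponentIn.image _ continuous_subtype_val.continuousOn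

theorem connectedComponentIn_mem_nhdsWithin [LocallyConnectedSpace S] {x : X} (hWS : W ⊆ S)
    (hp : p ∈ S) (hW : W ∈ 𝓝[S] p) (hpC : p ∈ closure (connectedComponentIn W x)) :
    connectedComponentIn W x ∈ 𝓝[S] p := by
  obtain ⟨N, hN, hNW, hNconn⟩ := exists_isPreconnected_mem_nhdsWithin_subset hp hW
  have : (𝓝[connectedComponentIn W x] p).NeBot := mem_closure_iff_nhdsWithin_neBot.1 hpC
  obtain ⟨y, hyN, hyC⟩ : (N ∩ connectedComponentIn W x).Nonempty :=
    nonempty_of_mem (inter_mem (nhdsWithin_mono p ((connectedComponentIn_subset W x).trans hWS) hN)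
      self_mem_nhdsWithin)
  rw [connectedComponentIn_eq hyC]
  exact mem_of_superset hN (hNconn.subset_connectedComponentIn hyN hNW)

theorem IsLocalMaxOn.isLocalExtrOn_of_const_mul {g : X → ℝ} {c : ℝ} (hc : c ≠ 0)
    (h : IsLocalMaxOn (fun v => c * g v) S p) : IsLocalExtrOn g S p := by
  rcases hc.lt_or_gt with hc | hc
  · exact Or.inl (h.mono fun v hv => (mul_le_mul_left_of_neg hc).1 hv)
  · exact Or.inr (h.mono fun v hv => (mul_le_mul_iff_right₀ hc).1 hv)

theorem exists_mem_connectedComponentIn_isLocalExtrOn [T2Space X] [LocallyConnectedSpace S]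
    (hS : IsCompact S) {g : X → ℝ} (hg : Continuous g) {x : X} (hx : x ∈ S) (hgx : g x ≠ 0) :
    ∃ p ∈ connectedComponentIn {v | v ∈ S ∧ g v ≠ 0} x, IsLocalExtrOn g S p := by
  set C := connectedComponentIn {v | v ∈ S ∧ g v ≠ 0} x
  have hCS : C ⊆ S := fun v hv => (connectedComponentIn_subset _ _ hv).1
  have hxC : x ∈ C := mem_connectedComponentIn ⟨hx, hgx⟩
  have hclCS : closure C ⊆ S := closure_minimal hCS hS.isClosed
  obtain ⟨p, hpC, hmax⟩ := (hS.of_isClosed_subset isClosed_closure hclCS).exists_isMaxOn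
    ⟨x, subset_closure hxC⟩ (continuous_const.mul hg).continuousOn
  have hpos : 0 < g x * g p := (mul_self_pos.2 hgx).trans_le (hmax (subset_closure hxC))
  have hpS : p ∈ S := hclCS hpC
  have hW : {v | v ∈ S ∧ g v ≠ 0} ∈ 𝓝[S] p :=
    inter_mem_nhdsWithin S
      ((isOpen_ne_fun hg continuous_const).mem_nhds (right_ne_zero_of_mul hpos.ne'))
  have hCp : C ∈ 𝓝[S] p := connectedComponentIn_mem_nhdsWithin (fun v hv => hv.1) hpS hW hpC
  refine ⟨p, mem_of_mem_nhdsWithin hpS hCp, IsLocalMaxOn.isLocalExtrOn_of_const_mul hgx ?_⟩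
  exact mem_of_superset hCp fun v hv => hmax (subset_closure hv)

end ConnectedComponent

section UnitSphere

def unitSphere (σ : Type*) [Fintype σ] : Set (σ → ℝ) := {v | ∑ i, v i ^ 2 = 1}

variable {σ : Type*} [Fintype σ]

theorem unitSphere_eq_preimage_sphere :
    unitSphere σ = WithLp.toLp 2 ⁻¹' sphere (0 : EuclideanSpace ℝ σ) 1 := by
  ext v
  simp [unitSphere, EuclideanSpace.norm_eq, Real.sqrt_eq_one]

theorem isCompact_unitSphere : IsCompact (unitSphere σ) := by
  rw [unitSphere_eq_preimage_sphere]
  exact (PiLp.homeomorph 2 fun _ : σ => ℝ).symm.isCompact_preimage.2 (isCompact_sphere 0 1)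

instance : LocallyConnectedSpace (unitSphere σ) := by
  rcases isEmpty_or_nonempty σ with hσ | hσ
  · have : IsEmpty (unitSphere σ) := ⟨fun v => by simpa [unitSphere] using v.2⟩
    infer_instance
  · obtain ⟨m, hm⟩ := Nat.exists_eq_add_one.2 (Fintype.card_pos (α := σ))
    have : Fact (Module.finrank ℝ (EuclideanSpace ℝ σ) = m + 1) := ⟨by simpa using hm⟩
    have := ChartedSpace.locallyConnectedSpace (EuclideanSpace ℝ (Fin m))
      (sphere (0 : EuclideanSpace ℝ σ) 1)
    exact ((PiLp.homeomorph 2 fun _ : σ => ℝ).symm.sets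
      unitSphere_eq_preimage_sphere).locallyConnectedSpace

end UnitSphere

theorem exists_grad_eq_smul_of_isLocalExtrOn_unitSphere {n : ℕ} {f : MvPolynomial (Fin n) ℝ}
    {p : Fin n → ℝ} (hp : p ∈ unitSphere (Fin n))
    (h : IsLocalExtrOn (fun v => eval v f) (unitSphere (Fin n)) p) :
    ∃ lam : ℝ, grad f p = lam • p := by
  classical
  set G : MvPolynomial (Fin n) ℝ := ∑ i, X i ^ 2
  have hS : unitSphere (Fin n) = {v | eval v G = eval p G} := by
    ext v
    simp [G, unitSphere, hp.out]
  obtain ⟨a, b, hab, hsum⟩ := (hS ▸ h).exists_multipliers_of_hasStrictFDerivAt_1d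
    (hasStrictFDerivAt_eval G p) (hasStrictFDerivAt_eval f p)
  have hcoord : ∀ i, a * (2 * p i) + b * grad f p i = 0 := fun i => by
    simpa [G, grad, pderiv_X, Pi.single_apply] using congr($hsum (Pi.single i 1))
  have hb : b ≠ 0 := by
    rintro rfl
    have ha : a ≠ 0 := by rintro rfl; exact hab rfl
    have hp0 : p = 0 := funext fun i => by simpa [ha] using hcoord i
    simp [unitSphere, hp0] at hp
  exact ⟨-(2 * a) / b, funext fun i => by
    rw [Pi.smul_apply, smul_eq_mul]; field_simp; linarith [hcoord i]⟩

theorem component_contains_eigenvector_general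
    {n : ℕ} (f : MvPolynomial (Fin n) ℝ)
    (U : Set (Fin n → ℝ)) (x : Fin n → ℝ)
    (hx : x ∈ {v : Fin n → ℝ | (∑ i, v i ^ 2 = 1) ∧ eval v f ≠ 0})
    (hU : U = connectedComponentIn {v : Fin n → ℝ | (∑ i, v i ^ 2 = 1) ∧ eval v f ≠ 0} x) :
    ∃ v ∈ U, ∃ lam : ℝ, grad f v = lam • v := by
  subst hU
  obtain ⟨p, hpU, hp⟩ := exists_mem_connectedComponentIn_isLocalExtrOn
    (isCompact_unitSphere (σ := Fin n)) (continuous_eval f) hx.1 hx.2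
  have hpS : p ∈ unitSphere (Fin n) := (connectedComponentIn_subset _ _ hpU).1
  exact ⟨p, hpU, exists_grad_eq_smul_of_isLocalExtrOn_unitSphere hpS hp⟩

/-- Every connected component of `{v ∈ S^{n-1} : f(v) ≠ 0}` contains a real
eigenvector of the homogeneous polynomial `f`. -/
theorem component_contains_eigenvector
    {n : ℕ} (hn : 1 ≤ n) {d : ℕ} (hd : 1 ≤ d) (f : MvPolynomial (Fin n) ℝ)
    (hf : f.IsHomogeneous d) (U : Set (Fin n → ℝ)) (x : Fin n → ℝ)
    (hx : x ∈ {v : Fin n → ℝ | (∑ i, v i ^ 2 = 1) ∧ eval v f ≠ 0})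
    (hU : U = connectedComponentIn {v : Fin n → ℝ | (∑ i, v i ^ 2 = 1) ∧ eval v f ≠ 0} x) :
    ∃ v ∈ U, ∃ lam : ℝ, grad f v = lam • v :=
  component_contains_eigenvector_general f U x hx hU
end

section
/- Let n ≥ 1 and let f ∈ ℝ[x₁,…,xₙ] be a homogeneous polynomial of degree d ≥ 1. If the set {v ∈ S^{n-1} : f(v) ≠ 0} has at least m connected components, then f has at least ⌈m/2⌉ distinct real eigenvectors, i.e., there are at least ⌈m/2⌉ distinct classes [v] ∈ ℝℙ^{n-1} with v a nonzero vector satisfying ∇f(v) = λv for some λ ∈ ℝ. -/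
open MvPolynomial

/-!
On a connected component `C` of `{v ∈ S^{n-1} | f v ≠ 0}`, the function `|f|` attains its maximum
over the compact set `closure C` at a point where `f ≠ 0`, hence at a point of `C` itself. As `C`
is open in the sphere, that point is a local extremum of `f` on the sphere, so by Lagrange
multipliers it is an eigenvector. Distinct components give distinct unit eigenvectors, and a
projective class contains only two unit vectors `±v`.
-/

open Metric Set Filter Topology

namespace MvPolynomial

theorem hasStrictFDerivAt_eval_s7 {σ : Type*} [Fintype σ] (p : MvPolynomial σ ℝ) (v : σ → ℝ) :
    HasStrictFDerivAt (fun w => eval w p)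
      (∑ i, eval v (pderiv i p) • (ContinuousLinearMap.proj i : (σ → ℝ) →L[ℝ] ℝ)) v := by
  classical
  induction p using MvPolynomial.induction_on with
  | C a => simpa using hasStrictFDerivAt_const a v
  | add p q hp hq => simpa [add_smul, Finset.sum_add_distrib] using hp.fun_add hq
  | mul_X p i hp =>
    have hderiv :
        ∑ j, eval v (pderiv j (p * X i)) • (ContinuousLinearMap.proj j : (σ → ℝ) →L[ℝ] ℝ)
          = eval v p • ContinuousLinearMap.proj i
            + v i • ∑ j, eval v (pderiv j p) • (ContinuousLinearMap.proj j : (σ → ℝ) →L[ℝ] ℝ) := by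
      ext h
      simp [pderiv_X, Pi.single_apply, Finset.sum_add_distrib, Finset.mul_sum, add_mul, mul_assoc,
        apply_ite (eval v), ite_mul]
    rw [hderiv]
    simpa using hp.fun_mul (ContinuousLinearMap.proj i : (σ → ℝ) →L[ℝ] ℝ).hasStrictFDerivAt

end MvPolynomial

theorem mem_connectedComponentIn_of_mem_closure {α : Type*} [TopologicalSpace α] {F : Set α}
    {x y : α} (hy : y ∈ closure (connectedComponentIn F x)) (hyF : y ∈ F) :
    y ∈ connectedComponentIn F x := by
  have hx : x ∈ F := by
    by_contra hx
    simp [connectedComponentIn_eq_empty hx] at hy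
  have hpre : IsPreconnected (insert y (connectedComponentIn F x)) :=
    isPreconnected_connectedComponentIn.subset_closure (subset_insert _ _)
      (insert_subset hy subset_closure)
  exact hpre.subset_connectedComponentIn (mem_insert_of_mem _ (mem_connectedComponentIn hx))
    (insert_subset hyF (connectedComponentIn_subset F x)) (mem_insert y _)

theorem IsLocalMaxOn.isLocalExtrOn_of_abs {α : Type*} [TopologicalSpace α] {g : α → ℝ}
    {s : Set α} {a : α} (h : IsLocalMaxOn (fun x => |g x|) s a) : IsLocalExtrOn g s a := by
  rcases le_total 0 (g a) with ha | ha
  · refine Or.inr (Filter.Eventually.mono h fun x hx => ?_)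
    exact (le_abs_self (g x)).trans (hx.trans_eq (abs_of_nonneg ha))
  · refine Or.inl (Filter.Eventually.mono h fun x hx => ?_)
    have := neg_abs_le (g x)
    simp only [abs_of_nonpos ha] at hx
    linarith

section NormedSpace

variable {E : Type*} [NormedAddCommGroup E] [NormedSpace ℝ E]

theorem connectedComponentIn_mem_nhdsWithin_sphere {U : Set E} (hU : IsOpen U) {v : E}
    (hv : v ∈ sphere (0 : E) 1 ∩ U) :
    connectedComponentIn (sphere 0 1 ∩ U) v ∈ 𝓝[sphere 0 1] v := by
  -- the radial projection is a continuous retraction of `{0}ᶜ` onto the sphere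
  set r : E → E := fun w => ‖w‖⁻¹ • w
  have hr : ContinuousOn r {0}ᶜ := fun w hw =>
    ((continuous_norm.continuousAt.inv₀ (norm_ne_zero_iff.2 hw)).smul
      continuousAt_id).continuousWithinAt
  have hr_sphere : ∀ w ∈ sphere (0 : E) 1, r w = w := fun w hw => by
    simp [r, mem_sphere_zero_iff_norm.1 hw]
  have hv₀ : v ≠ 0 := ne_zero_of_mem_unit_sphere ⟨v, hv.1⟩
  obtain ⟨ε, hε, hball⟩ : ∃ ε > 0, ball v ε ⊆ {0}ᶜ ∩ r ⁻¹' U :=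
    isOpen_iff.1 (hr.isOpen_inter_preimage isOpen_compl_singleton hU) v
      ⟨hv₀, by simpa [hr_sphere v hv.1] using hv.2⟩
  have himage : r '' ball v ε ⊆ connectedComponentIn (sphere 0 1 ∩ U) v := by
    refine ((convex_ball v ε).isPreconnected.image r (hr.mono (hball.trans inter_subset_left)))
      |>.subset_connectedComponentIn ⟨v, mem_ball_self hε, hr_sphere v hv.1⟩ ?_
    rintro _ ⟨w, hw, rfl⟩
    exact ⟨by simp [r, norm_smul, inv_mul_cancel₀ (norm_ne_zero_iff.2 (hball hw).1)], (hball hw).2⟩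
  filter_upwards [inter_mem_nhdsWithin (sphere (0 : E) 1) (ball_mem_nhds v hε),
    self_mem_nhdsWithin] with w hw hws
  exact himage ⟨w, hw.2, hr_sphere w hws⟩

theorem exists_mem_connectedComponentIn_isLocalExtrOn_sphere [ProperSpace E] {g : E → ℝ}
    (hg : Continuous g) {x₀ : E} (hx₀ : x₀ ∈ sphere (0 : E) 1 ∩ {x | g x ≠ 0}) :
    ∃ v ∈ connectedComponentIn (sphere 0 1 ∩ {x | g x ≠ 0}) x₀,
      IsLocalExtrOn g (sphere 0 1) v := by
  set A := sphere (0 : E) 1 ∩ {x | g x ≠ 0}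
  set C := connectedComponentIn A x₀
  have hA : IsOpen {x | g x ≠ 0} := isOpen_ne_fun hg continuous_const
  have hCS : closure C ⊆ sphere 0 1 :=
    closure_minimal ((connectedComponentIn_subset A x₀).trans inter_subset_left) isClosed_sphere
  have hC : IsCompact (closure C) :=
    (isCompact_sphere 0 1).of_isClosed_subset isClosed_closure hCS
  have hx₀C : x₀ ∈ C := mem_connectedComponentIn hx₀
  obtain ⟨v, hv, hmax⟩ := hC.exists_isMaxOn ⟨x₀, subset_closure hx₀C⟩ hg.abs.continuousOn
  have hvA : v ∈ A :=
    ⟨hCS hv, abs_pos.1 ((abs_pos.2 hx₀.2).trans_le (hmax (subset_closure hx₀C)))⟩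
  have hvC : v ∈ C := mem_connectedComponentIn_of_mem_closure hv hvA
  refine ⟨v, hvC, IsLocalMaxOn.isLocalExtrOn_of_abs ?_⟩
  filter_upwards [connectedComponentIn_mem_nhdsWithin_sphere hA hvA] with w hw
  rw [← connectedComponentIn_eq hvC] at hw
  exact hmax (subset_closure hw)

end NormedSpace

section InnerProductSpace

variable {F : Type*} [NormedAddCommGroup F] [InnerProductSpace ℝ F]

theorem IsLocalExtrOn.exists_eq_smul_innerSL_of_sphere [CompleteSpace F] {g : F → ℝ}
    {g' : StrongDual ℝ F} {v : F} (hv : v ∈ sphere (0 : F) 1)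
    (hextr : IsLocalExtrOn g (sphere 0 1) v) (hg : HasStrictFDerivAt g g' v) :
    ∃ c : ℝ, g' = c • innerSL ℝ v := by
  have hv' : ‖v‖ = 1 := mem_sphere_zero_iff_norm.1 hv
  have hsphere : {x : F | ‖x‖ ^ 2 = ‖v‖ ^ 2} = sphere 0 1 := by
    ext x
    rw [mem_ofPred_eq, sq_eq_sq₀ (norm_nonneg x) (norm_nonneg v), hv', mem_sphere_zero_iff_norm]
  obtain ⟨a, b, hab, habg⟩ := (hsphere ▸ hextr).exists_multipliers_of_hasStrictFDerivAt_1d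
    (hasStrictFDerivAt_norm_sq v) hg
  have hb : b ≠ 0 := by
    rintro rfl
    have ha : a ≠ 0 := fun ha => hab (by simp [ha])
    have : innerSL ℝ v = 0 := by
      simpa [ha, ← Nat.cast_smul_eq_nsmul ℝ] using habg
    have := congrArg norm this
    rw [innerSL_apply_norm, hv', norm_zero] at this
    exact one_ne_zero this
  refine ⟨-(2 * a) / b, ContinuousLinearMap.ext fun x => ?_⟩
  have := congr($habg x)
  simp only [add_apply, smul_apply, coe_innerSL_apply,
    nsmul_eq_mul, Nat.cast_ofNat, smul_eq_mul, zero_apply] at this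
  simp only [smul_apply, coe_innerSL_apply, smul_eq_mul]
  field_simp
  linarith

theorem exists_mem_connectedComponentIn_eq_smul_innerSL [FiniteDimensional ℝ F] {g : F → ℝ}
    {g' : F → StrongDual ℝ F} (hg : ∀ x, HasStrictFDerivAt g (g' x) x) {x₀ : F}
    (hx₀ : x₀ ∈ sphere (0 : F) 1 ∩ {x | g x ≠ 0}) :
    ∃ v ∈ connectedComponentIn (sphere 0 1 ∩ {x | g x ≠ 0}) x₀,
      ∃ c : ℝ, g' v = c • innerSL ℝ v := by
  have hgc : Continuous g := continuous_iff_continuousAt.2 fun x => (hg x).continuousAt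
  obtain ⟨v, hvC, hextr⟩ := exists_mem_connectedComponentIn_isLocalExtrOn_sphere hgc hx₀
  exact ⟨v, hvC, hextr.exists_eq_smul_innerSL_of_sphere
    (connectedComponentIn_subset _ _ hvC).1 (hg v)⟩

end InnerProductSpace

theorem exists_mem_connectedComponentIn_grad_eq_smul {n : ℕ} (f : MvPolynomial (Fin n) ℝ)
    {x₀ : Fin n → ℝ} (hx₀ : x₀ ∈ {v : Fin n → ℝ | (∑ k, v k ^ 2 = 1) ∧ eval v f ≠ 0}) :
    ∃ v ∈ connectedComponentIn {v : Fin n → ℝ | (∑ k, v k ^ 2 = 1) ∧ eval v f ≠ 0} x₀,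
      ∃ c : ℝ, grad f v = c • v := by
  set A := {v : Fin n → ℝ | (∑ k, v k ^ 2 = 1) ∧ eval v f ≠ 0}
  set e := EuclideanSpace.equiv (Fin n) ℝ
  have hA : e.symm '' A = sphere 0 1 ∩ {w | eval (e w) f ≠ 0} := by
    rw [e.image_symm_eq_preimage, EuclideanSpace.sphere_zero_eq 1 zero_le_one]
    ext w
    simp [A, e]
  have hg : ∀ w, HasStrictFDerivAt (fun w => eval (e w) f)
      ((∑ i, eval (e w) (pderiv i f) • (ContinuousLinearMap.proj i : (Fin n → ℝ) →L[ℝ] ℝ)).comp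
        (e : EuclideanSpace ℝ (Fin n) →L[ℝ] Fin n → ℝ)) w :=
    fun w => (hasStrictFDerivAt_eval_s7 f (e w)).comp w e.hasStrictFDerivAt
  obtain ⟨w, hw, c, hc⟩ := exists_mem_connectedComponentIn_eq_smul_innerSL hg
    (x₀ := e.symm x₀) (hA ▸ mem_image_of_mem _ hx₀)
  rw [← hA] at hw
  obtain ⟨v, hv, rfl⟩ : w ∈ e.symm.toHomeomorph '' connectedComponentIn A x₀ := by
    rwa [e.symm.toHomeomorph.image_connectedComponentIn hx₀]
  refine ⟨v, hv, c, funext fun j => ?_⟩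
  have := congr($hc (EuclideanSpace.single j 1))
  simp only [ContinuousLinearEquiv.coe_toHomeomorph, ContinuousLinearEquiv.apply_symm_apply]
    at this
  simpa [grad, e, EuclideanSpace.inner_single_right] using this

namespace Finset

theorem card_le_two_mul_card_image_of_eq_or_eq_neg {α β E : Type*} [DecidableEq β]
    [DecidableEq E] [Neg E] (s : Finset α) {u : α → E} (hu : Set.InjOn u s) (φ : α → β)
    (h : ∀ i ∈ s, ∀ j ∈ s, φ i = φ j → u j = u i ∨ u j = -u i) :
    #s ≤ 2 * #(s.image φ) := by
  refine card_le_mul_card_image s 2 fun p hp => ?_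
  obtain ⟨i, hi, rfl⟩ := mem_image.1 hp
  calc #{j ∈ s | φ j = φ i}
      = #(image u {j ∈ s | φ j = φ i}) :=
        (card_image_of_injOn (hu.mono (coe_subset.2 (filter_subset _ s)))).symm
    _ ≤ #{u i, -u i} := card_le_card fun w hw => by
        obtain ⟨j, hj, rfl⟩ := mem_image.1 hw
        rw [mem_filter] at hj
        rcases h i hi j hj.1 hj.2.symm with hji | hji <;> simp [hji]
    _ ≤ 2 := card_le_two

end Finset

theorem eq_or_eq_neg_of_mk_eq_mk {ι : Type*} [Fintype ι] {u w : ι → ℝ}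
    (hu : ∑ k, u k ^ 2 = 1) (hw : ∑ k, w k ^ 2 = 1) {hu₀ : u ≠ 0} {hw₀ : w ≠ 0}
    (h : Projectivization.mk ℝ u hu₀ = Projectivization.mk ℝ w hw₀) : w = u ∨ w = -u := by
  obtain ⟨c, rfl⟩ := (Projectivization.mk_eq_mk_iff' ℝ w u hw₀ hu₀).1 h.symm
  have hc : c ^ 2 = 1 := by
    simpa [mul_pow, ← Finset.mul_sum, hu] using hw
  rcases sq_eq_one_iff.1 hc with rfl | rfl <;> simp

theorem eigenvectors_ge_half_components_general
    {n : ℕ} (f : MvPolynomial (Fin n) ℝ)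
    (m : ℕ) (x : Fin m → (Fin n → ℝ))
    (hx : ∀ i, x i ∈ {v : Fin n → ℝ | (∑ k, v k ^ 2 = 1) ∧ eval v f ≠ 0})
    (hdistinct : ∀ i j, i ≠ j →
      connectedComponentIn {v : Fin n → ℝ | (∑ k, v k ^ 2 = 1) ∧ eval v f ≠ 0} (x i) ≠
      connectedComponentIn {v : Fin n → ℝ | (∑ k, v k ^ 2 = 1) ∧ eval v f ≠ 0} (x j)) :
    ∃ T : Finset (Projectivization ℝ (Fin n → ℝ)),
      (m + 1) / 2 ≤ T.card ∧ ∀ p ∈ T, p ∈ eigSet f := by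
  classical
  choose v hvC c hc using fun i => exists_mem_connectedComponentIn_grad_eq_smul f (hx i)
  have hv_sphere : ∀ i, ∑ k, v i k ^ 2 = 1 :=
    fun i => (connectedComponentIn_subset _ _ (hvC i)).1
  have hv₀ : ∀ i, v i ≠ 0 := fun i hi => by simpa [hi] using hv_sphere i
  have hv_inj : Function.Injective v := fun i j hij => by
    by_contra hne
    exact hdistinct i j hne <| by
      rw [connectedComponentIn_eq (hvC i), connectedComponentIn_eq (hvC j), hij]
  let p : Fin m → Projectivization ℝ (Fin n → ℝ) := fun i => Projectivization.mk ℝ (v i) (hv₀ i)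
  refine ⟨Finset.univ.image p, ?_, ?_⟩
  · have := Finset.card_le_two_mul_card_image_of_eq_or_eq_neg Finset.univ hv_inj.injOn p
      fun i _ j _ hij => eq_or_eq_neg_of_mk_eq_mk (hv_sphere i) (hv_sphere j) hij
    rw [Finset.card_univ, Fintype.card_fin] at this
    omega
  · simp only [Finset.mem_image, Finset.mem_univ, true_and, forall_exists_index,
      forall_apply_eq_imp_iff]
    exact fun i => ⟨v i, hv₀ i, c i, rfl, hc i⟩

/-- If `{v ∈ S^{n-1} : f(v) ≠ 0}` has at least `m` connected components (witnessed by
`m` points lying in pairwise distinct components), then the homogeneous polynomial `f`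
has at least `⌈m/2⌉` distinct real eigenvectors, counted projectively. -/
theorem eigenvectors_ge_half_components
    {n : ℕ} (hn : 1 ≤ n) {d : ℕ} (hd : 1 ≤ d) (f : MvPolynomial (Fin n) ℝ)
    (hf : f.IsHomogeneous d) (m : ℕ) (x : Fin m → (Fin n → ℝ))
    (hx : ∀ i, x i ∈ {v : Fin n → ℝ | (∑ k, v k ^ 2 = 1) ∧ eval v f ≠ 0})
    (hdistinct : ∀ i j, i ≠ j →
      connectedComponentIn {v : Fin n → ℝ | (∑ k, v k ^ 2 = 1) ∧ eval v f ≠ 0} (x i) ≠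
      connectedComponentIn {v : Fin n → ℝ | (∑ k, v k ^ 2 = 1) ∧ eval v f ≠ 0} (x j)) :
    ∃ T : Finset (Projectivization ℝ (Fin n → ℝ)),
      (m + 1) / 2 ≤ T.card ∧ ∀ p ∈ T, p ∈ eigSet f :=
  eigenvectors_ge_half_components_general f m x hx hdistinct
end
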